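/- Softassign transition: let X be an n×n real matrix and for β > 0 define S^β_X = P_sk(exp(βX)), the Sinkhorn projection of the entrywise exponential of βX. Then for any β₁, β₂ > 0, S^{β₂}_X = P_sk( (S^{β₁}_X)^{∘(β₂/β₁)} ). -/

import Mathlib

/-!
Two positive diagonal scalings `D(a) P D(b)` of a positive doubly stochastic matrix `P` that is
again doubly stochastic must be `P` itself: if `b` attains its maximum at `j₀`, the row sums give
`a i * b j₀ ≥ 1` for every `i`, the column sum at `j₀` forces equality, and then every row sum
forces `b` to be constant. Hence the Sinkhorn projection of a positive matrix is unique and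
depends only on the matrix up to diagonal scaling. Since the entrywise power sends
`D(r) exp(β₁X) D(c)` to `D(r^t) exp(β₁ t X) D(c^t)`, with `t = β₂ / β₁` this is a diagonal
scaling of `exp(β₂X)`.
-/

open Matrix

/-- `P` is the Sinkhorn projection of `X`: a doubly stochastic matrix of the form
`D(r) X D(c)` with positive scaling vectors. -/
def IsSinkhornProj {n : ℕ} (X P : Matrix (Fin n) (Fin n) ℝ) : Prop :=
  ∃ r c : Fin n → ℝ, (∀ i, 0 < r i) ∧ (∀ i, 0 < c i) ∧
    P = Matrix.diagonal r * X * Matrix.diagonal c ∧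
    P ∈ doublyStochastic ℝ (Fin n)

/-- Entrywise power of a matrix. -/
noncomputable def hadamardPow {n : ℕ} (X : Matrix (Fin n) (Fin n) ℝ) (t : ℝ) :
    Matrix (Fin n) (Fin n) ℝ :=
  Matrix.of fun i j => (X i j) ^ t

/-- Entrywise exponential of `β • X`. -/
noncomputable def entryExp {n : ℕ} (β : ℝ) (X : Matrix (Fin n) (Fin n) ℝ) :
    Matrix (Fin n) (Fin n) ℝ :=
  Matrix.of fun i j => Real.exp (β * X i j)

lemma diagonal_mul_mul_diagonal_apply {ι α : Type*} [Fintype ι] [DecidableEq ι]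
    [NonUnitalNonAssocSemiring α] (a b : ι → α) (P : Matrix ι ι α) (i j : ι) :
    (diagonal a * P * diagonal b) i j = a i * P i j * b j := by
  rw [mul_diagonal, diagonal_mul]

section Scaling

variable {ι R : Type*} [Fintype ι] [DecidableEq ι]
  [Field R] [LinearOrder R] [IsStrictOrderedRing R]
  {P : Matrix ι ι R} {a b : ι → R}

lemma one_le_mul_of_isMax_of_diagonal_mul_mul_diagonal_mem_doublyStochastic
    (hP : ∀ i j, 0 < P i j) (hPd : P ∈ doublyStochastic R ι)
    (ha : ∀ i, 0 < a i) (hQd : diagonal a * P * diagonal b ∈ doublyStochastic R ι)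
    {j₀ : ι} (hj₀ : ∀ j, b j ≤ b j₀) (i : ι) :
    1 ≤ a i * b j₀ := calc
  1 = ∑ j, a i * P i j * b j := by
    simp only [← sum_row_of_mem_doublyStochastic hQd i, diagonal_mul_mul_diagonal_apply]
  _ ≤ ∑ j, a i * P i j * b j₀ :=
    Finset.sum_le_sum fun j _ =>
      mul_le_mul_of_nonneg_left (hj₀ j) (mul_nonneg (ha i).le (hP i j).le)
  _ = a i * b j₀ := by
    rw [← Finset.sum_mul, ← Finset.mul_sum, sum_row_of_mem_doublyStochastic hPd i, mul_one]

lemma mul_eq_one_of_isMax_of_diagonal_mul_mul_diagonal_mem_doublyStochastic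
    (hP : ∀ i j, 0 < P i j) (hPd : P ∈ doublyStochastic R ι)
    (ha : ∀ i, 0 < a i) (hQd : diagonal a * P * diagonal b ∈ doublyStochastic R ι)
    {j₀ : ι} (hj₀ : ∀ j, b j ≤ b j₀) (i : ι) :
    a i * b j₀ = 1 := by
  have hle : ∀ k ∈ Finset.univ, P k j₀ * 1 ≤ P k j₀ * (a k * b j₀) := fun k _ =>
    mul_le_mul_of_nonneg_left
      (one_le_mul_of_isMax_of_diagonal_mul_mul_diagonal_mem_doublyStochastic hP hPd ha hQd hj₀ k)
      (hP k j₀).le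
  have hcol : ∑ k, P k j₀ * 1 = ∑ k, P k j₀ * (a k * b j₀) := by
    simp only [mul_one, sum_col_of_mem_doublyStochastic hPd]
    rw [← sum_col_of_mem_doublyStochastic hQd j₀]
    exact Finset.sum_congr rfl fun k _ => by rw [diagonal_mul_mul_diagonal_apply]; ring
  have := (Finset.sum_eq_sum_iff_of_le hle).mp hcol i (Finset.mem_univ i)
  exact (mul_left_cancel₀ (hP i j₀).ne' this).symm

lemma eq_of_isMax_of_diagonal_mul_mul_diagonal_mem_doublyStochastic
    (hP : ∀ i j, 0 < P i j) (hPd : P ∈ doublyStochastic R ι)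
    (ha : ∀ i, 0 < a i) (hQd : diagonal a * P * diagonal b ∈ doublyStochastic R ι)
    {j₀ : ι} (hj₀ : ∀ j, b j ≤ b j₀) (j : ι) :
    b j = b j₀ := by
  have hab := mul_eq_one_of_isMax_of_diagonal_mul_mul_diagonal_mem_doublyStochastic
    hP hPd ha hQd hj₀ j
  have hle : ∀ k ∈ Finset.univ, a j * P j k * b k ≤ a j * P j k * b j₀ := fun k _ =>
    mul_le_mul_of_nonneg_left (hj₀ k) (mul_nonneg (ha j).le (hP j k).le)
  have hrow : ∑ k, a j * P j k * b k = ∑ k, a j * P j k * b j₀ := by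
    rw [← Finset.sum_mul, ← Finset.mul_sum, sum_row_of_mem_doublyStochastic hPd, mul_one, hab]
    simp only [← sum_row_of_mem_doublyStochastic hQd j, diagonal_mul_mul_diagonal_apply]
  have := (Finset.sum_eq_sum_iff_of_le hle).mp hrow j (Finset.mem_univ j)
  exact mul_left_cancel₀ (mul_pos (ha j) (hP j j)).ne' this

theorem diagonal_mul_mul_diagonal_eq_self_of_mem_doublyStochastic
    (hP : ∀ i j, 0 < P i j) (hPd : P ∈ doublyStochastic R ι)
    (ha : ∀ i, 0 < a i) (hQd : diagonal a * P * diagonal b ∈ doublyStochastic R ι) :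
    diagonal a * P * diagonal b = P := by
  ext i j
  have : Nonempty ι := ⟨j⟩
  obtain ⟨j₀, hj₀⟩ := Finite.exists_max b
  rw [diagonal_mul_mul_diagonal_apply,
    eq_of_isMax_of_diagonal_mul_mul_diagonal_mem_doublyStochastic hP hPd ha hQd hj₀ j,
    mul_right_comm,
    mul_eq_one_of_isMax_of_diagonal_mul_mul_diagonal_mem_doublyStochastic hP hPd ha hQd hj₀ i,
    one_mul]

end Scaling

namespace IsSinkhornProj

variable {n : ℕ} {X P Q : Matrix (Fin n) (Fin n) ℝ}

theorem of_diagonal_mul_mul_diagonal {r c : Fin n → ℝ} (hr : ∀ i, 0 < r i) (hc : ∀ i, 0 < c i)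
    (hP : IsSinkhornProj (diagonal r * X * diagonal c) P) : IsSinkhornProj X P := by
  obtain ⟨r', c', hr', hc', rfl, hPd⟩ := hP
  refine ⟨fun i => r' i * r i, fun i => c i * c' i, fun i => mul_pos (hr' i) (hr i),
    fun i => mul_pos (hc i) (hc' i), ?_, hPd⟩
  simp only [← diagonal_mul_diagonal, Matrix.mul_assoc]

theorem unique (hX : ∀ i j, 0 < X i j) (hP : IsSinkhornProj X P) (hQ : IsSinkhornProj X Q) :
    P = Q := by
  obtain ⟨r, c, hr, hc, rfl, hPd⟩ := hP
  obtain ⟨r', c', hr', -, rfl, hQd⟩ := hQ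
  have hQP : diagonal r' * X * diagonal c'
      = diagonal (fun i => r' i / r i) * (diagonal r * X * diagonal c)
        * diagonal (fun j => c' j / c j) := by
    ext i j
    simp only [diagonal_mul_mul_diagonal_apply]
    field_simp [(hr i).ne', (hc j).ne']
  rw [hQP] at hQd ⊢
  refine (diagonal_mul_mul_diagonal_eq_self_of_mem_doublyStochastic (fun i j => ?_) hPd
    (fun i => div_pos (hr' i) (hr i)) hQd).symm
  rw [diagonal_mul_mul_diagonal_apply]
  exact mul_pos (mul_pos (hr i) (hX i j)) (hc j)

end IsSinkhornProj

lemma hadamardPow_diagonal_mul_mul_diagonal {n : ℕ} {r c : Fin n → ℝ}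
    {X : Matrix (Fin n) (Fin n) ℝ}
    (hr : ∀ i, 0 ≤ r i) (hX : ∀ i j, 0 ≤ X i j) (hc : ∀ i, 0 ≤ c i) (t : ℝ) :
    hadamardPow (diagonal r * X * diagonal c) t
      = diagonal (fun i => r i ^ t) * hadamardPow X t * diagonal (fun i => c i ^ t) := by
  ext i j
  simp only [hadamardPow, of_apply, diagonal_mul_mul_diagonal_apply]
  rw [Real.mul_rpow (mul_nonneg (hr i) (hX i j)) (hc j), Real.mul_rpow (hr i) (hX i j)]

lemma hadamardPow_entryExp {n : ℕ} (β t : ℝ) (X : Matrix (Fin n) (Fin n) ℝ) :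
    hadamardPow (entryExp β X) t = entryExp (β * t) X := by
  ext i j
  simp only [hadamardPow, entryExp, of_apply, ← Real.exp_mul]
  ring_nf

theorem stmt8_general {n : ℕ} (X : Matrix (Fin n) (Fin n) ℝ) (β₁ β₂ : ℝ)
    (hβ₁ : 0 < β₁)
    (S₁ S₂ Q : Matrix (Fin n) (Fin n) ℝ)
    (hS₁ : IsSinkhornProj (entryExp β₁ X) S₁)
    (hS₂ : IsSinkhornProj (entryExp β₂ X) S₂)
    (hQ : IsSinkhornProj (hadamardPow S₁ (β₂ / β₁)) Q) :
    S₂ = Q := by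
  obtain ⟨r, c, hr, hc, rfl, -⟩ := hS₁
  rw [hadamardPow_diagonal_mul_mul_diagonal (X := entryExp β₁ X) (fun i => (hr i).le)
      (fun i j => (Real.exp_pos _).le) (fun i => (hc i).le),
    hadamardPow_entryExp, mul_div_cancel₀ β₂ hβ₁.ne'] at hQ
  exact hS₂.unique (fun i j => Real.exp_pos _) (hQ.of_diagonal_mul_mul_diagonal
    (fun i => Real.rpow_pos_of_pos (hr i) _) (fun i => Real.rpow_pos_of_pos (hc i) _))

/-- Softassign transition: with `S^β_X = P_sk(exp(βX))`, for `β₁, β₂ > 0` we have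
`S^{β₂}_X = P_sk((S^{β₁}_X)^{∘(β₂/β₁)})`. -/
theorem stmt8 {n : ℕ} (X : Matrix (Fin n) (Fin n) ℝ) (β₁ β₂ : ℝ)
    (hβ₁ : 0 < β₁) (hβ₂ : 0 < β₂)
    (S₁ S₂ Q : Matrix (Fin n) (Fin n) ℝ)
    (hS₁ : IsSinkhornProj (entryExp β₁ X) S₁)
    (hS₂ : IsSinkhornProj (entryExp β₂ X) S₂)
    (hQ : IsSinkhornProj (hadamardPow S₁ (β₂ / β₁)) Q) :
    S₂ = Q :=
  stmt8_general X β₁ β₂ hβ₁ S₁ S₂ Q hS₁ hS₂ hQ
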